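/- arXiv:2512.23543 — 3 statements merged into one kernel-verified Lean document; each statement's English description precedes it below -/
import Mathlib

section
/- For all positive integers n and m, the complete bipartite graph K_{2n,2m} admits an adapted complex structure. -/
/-!  Framework: the 2-step nilpotent Lie algebra `𝔫_G` associated to a finite simple
graph `G` (Dani–Mainkar construction), and adapted complex structures on it. -/

open scoped BigOperators

namespace GraphLie

variable {V : Type*} [Fintype V] [LinearOrder V]

/-- The underlying real vector space of the Lie algebra `𝔫_G` associated to a graph `G`:
real-valued functions on its basis `V ⊕ G.edgeSet` (vertices and edges). -/
abbrev Niln (G : SimpleGraph V) : Type _ := (V ⊕ G.edgeSet) → ℝ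

variable (G : SimpleGraph V) [DecidableRel G.Adj]

/-- The basis vector of `𝔫_G` corresponding to the vertex `v`. -/
noncomputable def vtx (v : V) : Niln G := Pi.single (Sum.inl v) 1

/-- The basis vector of `𝔫_G` corresponding to the edge `e`. -/
noncomputable def edg (e : G.edgeSet) : Niln G := Pi.single (Sum.inr e) 1

/-- The basis vector of `𝔫_G` corresponding to a vertex or an edge. -/
noncomputable def basisVec (b : V ⊕ G.edgeSet) : Niln G := Pi.single b 1

/-- The bracket of two vertex generators: for adjacent vertices `i < j` (with respect to
the chosen labeling of the vertices) `[v_i, v_j] = e_{i,j}` and `[v_j, v_i] = -e_{i,j}`;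
non-adjacent vertices commute. -/
noncomputable def bracketVtx (i j : V) : Niln G :=
  if h : G.Adj i j then
    (if i < j then edg G ⟨s(i, j), G.mem_edgeSet.mpr h⟩
     else - edg G ⟨s(i, j), G.mem_edgeSet.mpr h⟩)
  else 0

/-- The Lie bracket of `𝔫_G`, extended bilinearly from the generators; all the
edge generators are central. -/
noncomputable def bracket (x y : Niln G) : Niln G :=
  ∑ i : V, ∑ j : V, (x (Sum.inl i) * y (Sum.inl j)) • bracketVtx G i j

/-- An adapted complex structure on the graph `G`: a linear endomorphism `J` of `𝔫_G`
with `J ∘ J = -id`, whose Nijenhuis tensor vanishes, and which sends each basis vector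
(vertex or edge) to plus or minus a basis vector. -/
structure AdaptedCS : Type _ where
  J : Niln G →ₗ[ℝ] Niln G
  j_squared : ∀ x, J (J x) = -x
  integrable : ∀ x y,
    bracket G x y + J (bracket G (J x) y + bracket G x (J y)) - bracket G (J x) (J y) = 0
  adapted : ∀ b : V ⊕ G.edgeSet,
    (∃ b', J (basisVec G b) = basisVec G b') ∨ (∃ b', J (basisVec G b) = - basisVec G b')

variable {G}

/-- An edge of `G` joining vertices `v` and `w` is distinguished if `Jv = w` or `Jw = v`. -/
def AdaptedCS.Distinguished (Jc : AdaptedCS G) (e : G.edgeSet) : Prop :=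
  ∃ v w : V, (e : Sym2 V) = s(v, w) ∧
    (Jc.J (vtx G v) = vtx G w ∨ Jc.J (vtx G w) = vtx G v)

end GraphLie

/-- The complete bipartite graph `K_{p,q}`, modelled on the vertex set `Fin (p + q)`
with parts `{0, …, p-1}` and `{p, …, p+q-1}`: two vertices are adjacent exactly when
they lie in different parts. -/
def completeBipartite (p q : ℕ) : SimpleGraph (Fin (p + q)) where
  Adj i j := ¬(((i : ℕ) < p) ↔ ((j : ℕ) < p))
  symm := ⟨by intro i j h hij; exact h hij.symm⟩
  loopless := ⟨by intro i h; exact h Iff.rfl⟩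

instance (p q : ℕ) : DecidableRel (completeBipartite p q).Adj := fun i j =>
  inferInstanceAs (Decidable ¬(((i : ℕ) < p) ↔ ((j : ℕ) < p)))

section K2nm

open GraphLie

variable (n m : ℕ)

/-- pair each vertex with its neighbour of opposite parity -/
def pairV (i : Fin (2*n+2*m)) : Fin (2*n+2*m) :=
  if h : Even (i : ℕ) then
    ⟨(i:ℕ)+1, by
      rcases Nat.lt_or_ge ((i:ℕ)+1) (2*n+2*m) with h'|h'
      · exact h'
      · exfalso
        have he : Even (2*n+2*m) := ⟨n+m, by ring⟩
        have heq : (i:ℕ)+1 = 2*n+2*m := le_antisymm (Nat.succ_le_of_lt i.2) h'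
        rw [← heq, Nat.even_add_one] at he
        exact he h⟩
  else ⟨(i:ℕ)-1, lt_of_le_of_lt (Nat.sub_le _ _) i.2⟩

variable {n m}

lemma pairV_val_even {i : Fin (2*n+2*m)} (h : Even (i:ℕ)) :
    ((pairV n m i : Fin (2*n+2*m)) : ℕ) = (i:ℕ) + 1 := by
  simp [pairV, h]

lemma pairV_val_odd {i : Fin (2*n+2*m)} (h : ¬ Even (i:ℕ)) :
    ((pairV n m i : Fin (2*n+2*m)) : ℕ) = (i:ℕ) - 1 := by
  simp [pairV, h]

lemma even_sub_one_of_odd {i : Fin (2*n+2*m)} (h : ¬ Even (i:ℕ)) : Even ((i:ℕ) - 1) :=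
  Nat.Odd.sub_odd (Nat.odd_iff.2 (Nat.not_even_iff.mp h)) odd_one

lemma one_le_of_odd {i : Fin (2*n+2*m)} (h : ¬ Even (i:ℕ)) : 1 ≤ (i:ℕ) :=
  Nat.one_le_iff_ne_zero.mpr (fun h0 => h (h0 ▸ Even.zero))

lemma even_pairV {i : Fin (2*n+2*m)} :
    Even ((pairV n m i : Fin (2*n+2*m)) : ℕ) ↔ ¬ Even (i:ℕ) := by
  by_cases h : Even (i:ℕ)
  · rw [pairV_val_even h, Nat.even_add_one]
  · rw [pairV_val_odd h]
    exact iff_of_true (even_sub_one_of_odd h) h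

lemma pairV_pairV (i : Fin (2*n+2*m)) : pairV n m (pairV n m i) = i := by
  by_cases h : Even (i:ℕ)
  · have h2 : ¬ Even ((pairV n m i : Fin (2*n+2*m)) : ℕ) := by
      rw [pairV_val_even h, Nat.even_add_one]; simpa using h
    apply Fin.ext
    rw [pairV_val_odd h2, pairV_val_even h]
    simp
  · have h2 : Even ((pairV n m i : Fin (2*n+2*m)) : ℕ) := even_pairV.mpr h
    apply Fin.ext
    rw [pairV_val_even h2, pairV_val_odd h]
    exact Nat.sub_add_cancel (one_le_of_odd h)

lemma pairV_lt_iff {i : Fin (2*n+2*m)} :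
    ((pairV n m i : Fin (2*n+2*m)) : ℕ) < 2*n ↔ (i:ℕ) < 2*n := by
  by_cases h : Even (i:ℕ)
  · rw [pairV_val_even h]
    constructor
    · intro h'; exact lt_of_le_of_lt (Nat.le_succ _) h'
    · intro h'
      rcases Nat.lt_or_ge ((i:ℕ)+1) (2*n) with h''|h''
      · exact h''
      · exfalso
        have heq : (i:ℕ)+1 = 2*n := le_antisymm (Nat.succ_le_of_lt h') h''
        have he : Even (2*n) := ⟨n, by ring⟩
        rw [← heq, Nat.even_add_one] at he
        exact he h
  · rw [pairV_val_odd h]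
    constructor
    · intro h'
      have hle : (i:ℕ) ≤ 2*n := by omega
      rcases lt_or_eq_of_le hle with h''|h''
      · exact h''
      · exfalso; exact h (by rw [h'']; exact ⟨n, by ring⟩)
    · intro h'; omega

end K2nm

section K2nm2

open GraphLie

variable {n m : ℕ}

/-- local abbreviation for the graph -/
local notation "G'" => completeBipartite (2*n) (2*m)

lemma adj_of {a b : Fin (2*n+2*m)} (ha : (a:ℕ) < 2*n) (hb : ¬ (b:ℕ) < 2*n) :
    (completeBipartite (2*n) (2*m)).Adj a b :=
  fun hiff => hb (hiff.mp ha)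

variable (n m)

def eMapFun (i j : Fin (2*n+2*m)) : Sym2 (Fin (2*n+2*m)) :=
  if (i:ℕ) < 2*n ∧ ¬ (j:ℕ) < 2*n then s(pairV n m i, j)
  else if (j:ℕ) < 2*n ∧ ¬ (i:ℕ) < 2*n then s(i, pairV n m j)
  else s(i, j)

lemma eMapFun_symm (i j : Fin (2*n+2*m)) : eMapFun n m i j = eMapFun n m j i := by
  unfold eMapFun
  by_cases hi : (i:ℕ) < 2*n <;> by_cases hj : (j:ℕ) < 2*n <;>
    simp [hi, hj, Sym2.eq_swap]

def eMap : Sym2 (Fin (2*n+2*m)) → Sym2 (Fin (2*n+2*m)) :=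
  Sym2.lift ⟨eMapFun n m, eMapFun_symm n m⟩

def eSgnFun (i j : Fin (2*n+2*m)) : ℝ :=
  if (i:ℕ) < 2*n ∧ ¬ (j:ℕ) < 2*n then (if Even (i:ℕ) then 1 else -1)
  else if (j:ℕ) < 2*n ∧ ¬ (i:ℕ) < 2*n then (if Even (j:ℕ) then 1 else -1)
  else 1

lemma eSgnFun_symm (i j : Fin (2*n+2*m)) : eSgnFun n m i j = eSgnFun n m j i := by
  unfold eSgnFun
  by_cases hi : (i:ℕ) < 2*n <;> by_cases hj : (j:ℕ) < 2*n <;> simp [hi, hj]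

def eSgn : Sym2 (Fin (2*n+2*m)) → ℝ :=
  Sym2.lift ⟨eSgnFun n m, eSgnFun_symm n m⟩

variable {n m}

lemma eMap_mk {a b : Fin (2*n+2*m)} (ha : (a:ℕ) < 2*n) (hb : ¬ (b:ℕ) < 2*n) :
    eMap n m s(a, b) = s(pairV n m a, b) := by
  rw [eMap, Sym2.lift_mk]
  simp [eMapFun, ha, hb]

lemma eSgn_mk {a b : Fin (2*n+2*m)} (ha : (a:ℕ) < 2*n) (hb : ¬ (b:ℕ) < 2*n) :
    eSgn n m s(a, b) = (if Even (a:ℕ) then (1:ℝ) else -1) := by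
  rw [eSgn, Sym2.lift_mk]
  simp [eSgnFun, ha, hb]

lemma edge_repr (e : (completeBipartite (2*n) (2*m)).edgeSet) :
    ∃ a b : Fin (2*n+2*m), (e : Sym2 (Fin (2*n+2*m))) = s(a, b) ∧
      (a:ℕ) < 2*n ∧ ¬ (b:ℕ) < 2*n := by
  obtain ⟨z, hz⟩ := e
  induction z using Sym2.ind with
  | _ i j =>
    have hz' : ¬(((i:ℕ) < 2*n) ↔ ((j:ℕ) < 2*n)) := hz
    by_cases hi : (i:ℕ) < 2*n
    · exact ⟨i, j, rfl, hi, fun hj => hz' (iff_of_true hi hj)⟩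
    · have hj : (j:ℕ) < 2*n := by
        by_contra hj; exact hz' (iff_of_false hi hj)
      exact ⟨j, i, Sym2.eq_swap, hj, hi⟩

lemma eMap_mem (e : (completeBipartite (2*n) (2*m)).edgeSet) :
    eMap n m (e : Sym2 (Fin (2*n+2*m))) ∈ (completeBipartite (2*n) (2*m)).edgeSet := by
  obtain ⟨a, b, hab, ha, hb⟩ := edge_repr e
  rw [hab, eMap_mk ha hb]
  exact (completeBipartite (2*n) (2*m)).mem_edgeSet.mpr (adj_of (pairV_lt_iff.mpr ha) hb)

variable (n m)

def fB : (Fin (2*n+2*m) ⊕ (completeBipartite (2*n) (2*m)).edgeSet) →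
    (Fin (2*n+2*m) ⊕ (completeBipartite (2*n) (2*m)).edgeSet)
  | Sum.inl v => Sum.inl (pairV n m v)
  | Sum.inr e => Sum.inr ⟨eMap n m (e : Sym2 (Fin (2*n+2*m))), eMap_mem e⟩

noncomputable def sg : (Fin (2*n+2*m) ⊕ (completeBipartite (2*n) (2*m)).edgeSet) → ℝ
  | Sum.inl v => if Even ((v : Fin (2*n+2*m)):ℕ) then 1 else -1
  | Sum.inr e => eSgn n m (e : Sym2 (Fin (2*n+2*m)))

variable {n m}

lemma eMap_eMap (e : (completeBipartite (2*n) (2*m)).edgeSet) :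
    eMap n m (eMap n m (e : Sym2 (Fin (2*n+2*m)))) = (e : Sym2 (Fin (2*n+2*m))) := by
  obtain ⟨a, b, hab, ha, hb⟩ := edge_repr e
  rw [hab, eMap_mk ha hb, eMap_mk (pairV_lt_iff.mpr ha) hb, pairV_pairV]

lemma fB_fB (c) : fB n m (fB n m c) = c := by
  cases c with
  | inl v => simp [fB, pairV_pairV]
  | inr e => exact congrArg Sum.inr (Subtype.ext (eMap_eMap e))

lemma sg_pairV (v : Fin (2*n+2*m)) :
    sg n m (Sum.inl (pairV n m v)) = - sg n m (Sum.inl v) := by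
  by_cases h : Even ((v:Fin (2*n+2*m)):ℕ) <;>
    simp [sg, even_pairV, h]

lemma sg_fB (c) : sg n m (fB n m c) * sg n m c = -1 := by
  cases c with
  | inl v =>
    rw [show fB n m (Sum.inl v) = Sum.inl (pairV n m v) from rfl, sg_pairV]
    by_cases h : Even ((v:Fin (2*n+2*m)):ℕ) <;> simp [sg, h]
  | inr e =>
    obtain ⟨a, b, hab, ha, hb⟩ := edge_repr e
    show eSgn n m (eMap n m (e : Sym2 (Fin (2*n+2*m)))) * eSgn n m (e:Sym2 (Fin (2*n+2*m))) = -1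
    rw [hab, eMap_mk ha hb, eSgn_mk ha hb, eSgn_mk (pairV_lt_iff.mpr ha) hb]
    by_cases h : Even ((a : Fin (2*n+2*m)):ℕ) <;> simp [even_pairV, h]

end K2nm2

section K2nm3

open GraphLie

variable (n m : ℕ)

noncomputable def Jmap :
    Niln (completeBipartite (2*n) (2*m)) →ₗ[ℝ] Niln (completeBipartite (2*n) (2*m)) where
  toFun x := fun c => sg n m (fB n m c) * x (fB n m c)
  map_add' x y := by funext c; simp [mul_add]
  map_smul' r x := by funext c; simp; ring

variable {n m}

lemma Jmap_apply (x : Niln (completeBipartite (2*n) (2*m))) (c) :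
    Jmap n m x c = sg n m (fB n m c) * x (fB n m c) := rfl

lemma J_single (b) :
    Jmap n m (basisVec (completeBipartite (2*n) (2*m)) b) =
      sg n m b • basisVec (completeBipartite (2*n) (2*m)) (fB n m b) := by
  funext c
  rw [Jmap_apply]
  simp only [basisVec, Pi.smul_apply, Pi.single_apply, smul_eq_mul]
  by_cases h : c = fB n m b
  · subst h
    rw [fB_fB]
    simp
  · have h2 : fB n m c ≠ b := fun hh => h (by rw [← hh, fB_fB])
    simp [h, h2]

lemma J_sq (x : Niln (completeBipartite (2*n) (2*m))) :
    Jmap n m (Jmap n m x) = -x := by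
  funext c
  rw [Jmap_apply, Jmap_apply, fB_fB, ← mul_assoc, sg_fB, neg_one_mul, Pi.neg_apply]

lemma sg_cases (b) : sg n m b = 1 ∨ sg n m b = -1 := by
  cases b with
  | inl v =>
    by_cases h : Even ((v : Fin (2*n+2*m)) : ℕ) <;> simp [sg, h]
  | inr e =>
    obtain ⟨a, b, hab, ha, hb⟩ := edge_repr e
    show eSgn n m _ = 1 ∨ eSgn n m _ = -1
    rw [hab, eSgn_mk ha hb]
    by_cases h : Even ((a : Fin (2*n+2*m)) : ℕ) <;> simp [h]

lemma J_adapted (b) :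
    (∃ b', Jmap n m (basisVec (completeBipartite (2*n) (2*m)) b) =
        basisVec (completeBipartite (2*n) (2*m)) b') ∨
    (∃ b', Jmap n m (basisVec (completeBipartite (2*n) (2*m)) b) =
        - basisVec (completeBipartite (2*n) (2*m)) b') := by
  rcases sg_cases (n := n) (m := m) b with h | h
  · exact Or.inl ⟨fB n m b, by rw [J_single, h, one_smul]⟩
  · exact Or.inr ⟨fB n m b, by rw [J_single, h, neg_one_smul]⟩

end K2nm3

section K2nm4

open GraphLie

variable {n m : ℕ}

lemma edg_congr {V : Type*} [Fintype V] [LinearOrder V] {G : SimpleGraph V}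
    [DecidableRel G.Adj] {e f : G.edgeSet} (h : (e : Sym2 V) = (f : Sym2 V)) :
    edg G e = edg G f := congrArg (edg G) (Subtype.ext h)

lemma bracketVtx_pos {a b : Fin (2*n+2*m)} (ha : (a:ℕ) < 2*n) (hb : ¬ (b:ℕ) < 2*n) :
    bracketVtx (completeBipartite (2*n) (2*m)) a b =
      edg (completeBipartite (2*n) (2*m))
        ⟨s(a, b), (completeBipartite (2*n) (2*m)).mem_edgeSet.mpr (adj_of ha hb)⟩ := by
  rw [bracketVtx, dif_pos (adj_of ha hb),
    if_pos (show a < b from Fin.lt_def.mpr (lt_of_lt_of_le ha (Nat.le_of_not_lt hb)))]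

lemma bracketVtx_swap (i j : Fin (2*n+2*m)) :
    bracketVtx (completeBipartite (2*n) (2*m)) j i
      = - bracketVtx (completeBipartite (2*n) (2*m)) i j := by
  by_cases h : (completeBipartite (2*n) (2*m)).Adj i j
  · have h' : (completeBipartite (2*n) (2*m)).Adj j i := h.symm
    have hne : i ≠ j := h.ne
    rw [bracketVtx, bracketVtx, dif_pos h, dif_pos h']
    have hsym : edg (completeBipartite (2*n) (2*m))
          ⟨s(j, i), (completeBipartite (2*n) (2*m)).mem_edgeSet.mpr h'⟩
        = edg (completeBipartite (2*n) (2*m))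
          ⟨s(i, j), (completeBipartite (2*n) (2*m)).mem_edgeSet.mpr h⟩ :=
      edg_congr Sym2.eq_swap
    rcases lt_or_gt_of_ne hne with hlt | hgt
    · rw [if_neg (asymm hlt), if_pos hlt, hsym]
    · rw [if_pos hgt, if_neg (asymm hgt), hsym, neg_neg]
  · have h' : ¬ (completeBipartite (2*n) (2*m)).Adj j i := fun hh => h hh.symm
    rw [bracketVtx, bracketVtx, dif_neg h, dif_neg h', neg_zero]

lemma J_edg {a b : Fin (2*n+2*m)} (ha : (a:ℕ) < 2*n) (hb : ¬ (b:ℕ) < 2*n) (hmem) :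
    Jmap n m (edg (completeBipartite (2*n) (2*m)) ⟨s(a, b), hmem⟩) =
      sg n m (Sum.inl a) • edg (completeBipartite (2*n) (2*m))
        ⟨s(pairV n m a, b),
          (completeBipartite (2*n) (2*m)).mem_edgeSet.mpr
            (adj_of (pairV_lt_iff.mpr ha) hb)⟩ := by
  have h1 : edg (completeBipartite (2*n) (2*m)) ⟨s(a,b), hmem⟩
      = basisVec (completeBipartite (2*n) (2*m)) (Sum.inr ⟨s(a,b), hmem⟩) := rfl
  rw [h1, J_single]
  have h2 : fB n m (Sum.inr ⟨s(a,b), hmem⟩)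
      = Sum.inr ⟨s(pairV n m a, b),
          (completeBipartite (2*n) (2*m)).mem_edgeSet.mpr
            (adj_of (pairV_lt_iff.mpr ha) hb)⟩ := by
    show Sum.inr _ = Sum.inr _
    exact congrArg Sum.inr (Subtype.ext (eMap_mk ha hb))
  rw [h2]
  have h3 : sg n m (Sum.inr ⟨s(a,b), hmem⟩) = sg n m (Sum.inl a) := by
    show eSgn n m s(a,b) = _
    rw [eSgn_mk ha hb]; rfl
  rw [h3]
  rfl

lemma sg_sq (v : Fin (2*n+2*m)) : sg n m (Sum.inl v) * sg n m (Sum.inl v) = 1 := by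
  by_cases h : Even ((v : Fin (2*n+2*m)) : ℕ) <;> simp [sg, h]

/-- the Nijenhuis combination on a pair of vertex generators -/
noncomputable def Mterm (n m : ℕ) (i j : Fin (2*n+2*m)) :
    Niln (completeBipartite (2*n) (2*m)) :=
  bracketVtx (completeBipartite (2*n) (2*m)) i j
  + sg n m (Sum.inl i) • Jmap n m (bracketVtx (completeBipartite (2*n) (2*m)) (pairV n m i) j)
  + sg n m (Sum.inl j) • Jmap n m (bracketVtx (completeBipartite (2*n) (2*m)) i (pairV n m j))
  - (sg n m (Sum.inl i) * sg n m (Sum.inl j)) •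
      bracketVtx (completeBipartite (2*n) (2*m)) (pairV n m i) (pairV n m j)

lemma Mterm_swap (i j : Fin (2*n+2*m)) : Mterm n m i j = - Mterm n m j i := by
  unfold Mterm
  rw [show bracketVtx (completeBipartite (2*n) (2*m)) i j = _ from bracketVtx_swap j i,
    show bracketVtx (completeBipartite (2*n) (2*m)) (pairV n m i) j = _ from
      bracketVtx_swap j (pairV n m i),
    show bracketVtx (completeBipartite (2*n) (2*m)) i (pairV n m j) = _ from
      bracketVtx_swap (pairV n m j) i,
    show bracketVtx (completeBipartite (2*n) (2*m)) (pairV n m i) (pairV n m j) = _ from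
      bracketVtx_swap (pairV n m j) (pairV n m i)]
  simp only [map_neg, smul_neg]
  module

lemma Mterm_half {i j : Fin (2*n+2*m)} (hi : (i:ℕ) < 2*n) (hj : ¬ (j:ℕ) < 2*n) :
    Mterm n m i j = 0 := by
  have hpi : ((pairV n m i : Fin (2*n+2*m)):ℕ) < 2*n := pairV_lt_iff.mpr hi
  have hpj : ¬ ((pairV n m j : Fin (2*n+2*m)):ℕ) < 2*n := fun h => hj (pairV_lt_iff.mp h)
  unfold Mterm
  rw [bracketVtx_pos hi hj, bracketVtx_pos hpi hj, bracketVtx_pos hi hpj,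
    bracketVtx_pos hpi hpj, J_edg hpi hj, J_edg hi hpj]
  rw [show edg (completeBipartite (2*n) (2*m))
      ⟨s(pairV n m (pairV n m i), j), _⟩
    = edg (completeBipartite (2*n) (2*m))
      ⟨s(i, j), (completeBipartite (2*n) (2*m)).mem_edgeSet.mpr (adj_of hi hj)⟩ from
    edg_congr (by show s(pairV n m (pairV n m i), j) = s(i, j); rw [pairV_pairV])]
  rw [sg_pairV]
  have h1 : sg n m (Sum.inl i) • (-sg n m (Sum.inl i)) •
      edg (completeBipartite (2*n) (2*m))
        ⟨s(i, j), (completeBipartite (2*n) (2*m)).mem_edgeSet.mpr (adj_of hi hj)⟩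
      = - edg (completeBipartite (2*n) (2*m))
        ⟨s(i, j), (completeBipartite (2*n) (2*m)).mem_edgeSet.mpr (adj_of hi hj)⟩ := by
    rw [smul_smul, mul_neg, sg_sq, ← neg_one_smul ℝ]
    norm_num
  rw [h1, smul_smul, mul_comm (sg n m (Sum.inl j))]
  abel

lemma Mterm_zero (i j : Fin (2*n+2*m)) : Mterm n m i j = 0 := by
  by_cases hadj : (completeBipartite (2*n) (2*m)).Adj i j
  · have hne : ¬(((i:ℕ) < 2*n) ↔ ((j:ℕ) < 2*n)) := hadj
    by_cases hi : (i:ℕ) < 2*n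
    · exact Mterm_half hi (fun hj => hne (iff_of_true hi hj))
    · have hj : (j:ℕ) < 2*n := by by_contra hj; exact hne (iff_of_false hi hj)
      rw [Mterm_swap, Mterm_half hj hi, neg_zero]
  · have hiff : ((i:ℕ) < 2*n) ↔ ((j:ℕ) < 2*n) := not_not.mp hadj
    have h2 : ¬ (completeBipartite (2*n) (2*m)).Adj (pairV n m i) j :=
      not_not.mpr (pairV_lt_iff.trans hiff)
    have h3 : ¬ (completeBipartite (2*n) (2*m)).Adj i (pairV n m j) :=
      not_not.mpr (hiff.trans pairV_lt_iff.symm)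
    have h4 : ¬ (completeBipartite (2*n) (2*m)).Adj (pairV n m i) (pairV n m j) :=
      not_not.mpr ((pairV_lt_iff.trans hiff).trans pairV_lt_iff.symm)
    unfold Mterm
    rw [bracketVtx, dif_neg hadj, bracketVtx, dif_neg h2, bracketVtx, dif_neg h3,
      bracketVtx, dif_neg h4]
    simp

end K2nm4

section K2nm5

open GraphLie

variable {n m : ℕ}

/-- the pairing as an equivalence, for reindexing sums -/
def pE (n m : ℕ) : Fin (2*n+2*m) ≃ Fin (2*n+2*m) :=
  ⟨pairV n m, pairV n m, pairV_pairV, pairV_pairV⟩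

lemma Jmap_at_pairV (x : Niln (completeBipartite (2*n) (2*m))) (v : Fin (2*n+2*m)) :
    Jmap n m x (Sum.inl (pairV n m v)) = sg n m (Sum.inl v) * x (Sum.inl v) := by
  have h : Jmap n m x (Sum.inl (pairV n m v))
      = sg n m (Sum.inl (pairV n m (pairV n m v))) *
          x (Sum.inl (pairV n m (pairV n m v))) := rfl
  rw [h, pairV_pairV]

lemma J_integrable (x y : Niln (completeBipartite (2*n) (2*m))) :
    bracket (completeBipartite (2*n) (2*m)) x y
    + Jmap n m (bracket (completeBipartite (2*n) (2*m)) (Jmap n m x) y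
        + bracket (completeBipartite (2*n) (2*m)) x (Jmap n m y))
    - bracket (completeBipartite (2*n) (2*m)) (Jmap n m x) (Jmap n m y) = 0 := by
  have hb : ∀ u v : Niln (completeBipartite (2*n) (2*m)),
      bracket (completeBipartite (2*n) (2*m)) u v
        = ∑ i, ∑ j, (u (Sum.inl i) * v (Sum.inl j)) •
            bracketVtx (completeBipartite (2*n) (2*m)) i j := fun _ _ => rfl
  rw [hb, hb, hb, hb]
  simp only [map_add, map_sum, map_smul]
  -- reindex second sum in i
  have r2 : (∑ i, ∑ j, ((Jmap n m x) (Sum.inl i) * y (Sum.inl j)) •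
        Jmap n m (bracketVtx (completeBipartite (2*n) (2*m)) i j))
      = ∑ i, ∑ j, ((sg n m (Sum.inl i) * x (Sum.inl i)) * y (Sum.inl j)) •
        Jmap n m (bracketVtx (completeBipartite (2*n) (2*m)) (pairV n m i) j) := by
    refine (Fintype.sum_equiv (pE n m) _ _ fun i => ?_).symm
    show _ = ∑ j, ((Jmap n m x) (Sum.inl (pairV n m i)) * y (Sum.inl j)) •
        Jmap n m (bracketVtx (completeBipartite (2*n) (2*m)) (pairV n m i) j)
    rw [Jmap_at_pairV]
  have r3 : (∑ i, ∑ j, (x (Sum.inl i) * (Jmap n m y) (Sum.inl j)) •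
        Jmap n m (bracketVtx (completeBipartite (2*n) (2*m)) i j))
      = ∑ i, ∑ j, (x (Sum.inl i) * (sg n m (Sum.inl j) * y (Sum.inl j))) •
        Jmap n m (bracketVtx (completeBipartite (2*n) (2*m)) i (pairV n m j)) := by
    refine Finset.sum_congr rfl fun i _ => ?_
    refine (Fintype.sum_equiv (pE n m) _ _ fun j => ?_).symm
    show _ = (x (Sum.inl i) * (Jmap n m y) (Sum.inl (pairV n m j))) •
        Jmap n m (bracketVtx (completeBipartite (2*n) (2*m)) i (pairV n m j))
    rw [Jmap_at_pairV]
  have r4 : (∑ i, ∑ j, ((Jmap n m x) (Sum.inl i) * (Jmap n m y) (Sum.inl j)) •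
        bracketVtx (completeBipartite (2*n) (2*m)) i j)
      = ∑ i, ∑ j, ((sg n m (Sum.inl i) * x (Sum.inl i)) *
            (sg n m (Sum.inl j) * y (Sum.inl j))) •
        bracketVtx (completeBipartite (2*n) (2*m)) (pairV n m i) (pairV n m j) := by
    refine (Fintype.sum_equiv (pE n m) _ _ fun i => ?_).symm
    show _ = ∑ j, ((Jmap n m x) (Sum.inl (pairV n m i)) * (Jmap n m y) (Sum.inl j)) •
        bracketVtx (completeBipartite (2*n) (2*m)) (pairV n m i) j
    rw [Jmap_at_pairV]
    refine Fintype.sum_equiv (pE n m) _ _ fun j => ?_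
    show _ = ((sg n m (Sum.inl i) * x (Sum.inl i)) *
        (Jmap n m y) (Sum.inl (pairV n m j))) •
        bracketVtx (completeBipartite (2*n) (2*m)) (pairV n m i) (pairV n m j)
    rw [Jmap_at_pairV]
  rw [r2, r3, r4]
  simp only [← Finset.sum_add_distrib, ← Finset.sum_sub_distrib]
  refine Finset.sum_eq_zero fun i _ => Finset.sum_eq_zero fun j _ => ?_
  have h := Mterm_zero (n := n) (m := m) i j
  have hexp : (x (Sum.inl i) * y (Sum.inl j)) • Mterm n m i j = 0 := by
    rw [h, smul_zero]
  unfold Mterm at hexp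
  linear_combination (norm := module) hexp

end K2nm5
/-- For all positive integers `n` and `m`, the complete bipartite graph
`K_{2n,2m}` admits an adapted complex structure. -/
theorem statement0 (n m : ℕ) (hn : 0 < n) (hm : 0 < m) :
    Nonempty (GraphLie.AdaptedCS (completeBipartite (2 * n) (2 * m))) := by
  exact ⟨{ J := Jmap n m
           j_squared := J_sq
           integrable := J_integrable
           adapted := J_adapted }⟩
end

section
/- Let J be an adapted complex structure on a finite simple graph G, and let u, v be adjacent vertices of G. The following are equivalent: (i) the edge joining u and v is distinguished; (ii) [Ju, v] + [u, Jv] = 0 in 𝔫_G; (iii) [Ju, v] = 0 and [u, Jv] = 0 in 𝔫_G. -/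
/-!  Framework: the 2-step nilpotent Lie algebra `𝔫_G` associated to a finite simple
graph `G` (Dani–Mainkar construction), and adapted complex structures on it. -/

open scoped BigOperators

namespace GraphLie

section

variable {V : Type*} [LinearOrder V] {G : SimpleGraph V}

lemma vtx_ne_zero (a : V) : vtx G a ≠ 0 :=
  Pi.single_ne_zero_iff.2 one_ne_zero

variable [DecidableRel G.Adj]

lemma bracketVtx_self (a : V) : bracketVtx G a a = 0 :=
  dif_neg (G.irrefl)

lemma bracketVtx_apply_inr_of_ne {a b : V} {e : G.edgeSet} (he : (e : Sym2 V) ≠ s(a, b)) :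
    bracketVtx G a b (Sum.inr e) = 0 := by
  unfold bracketVtx edg
  split_ifs <;> simp [Subtype.ext_iff, he]

lemma bracketVtx_apply_inr_ne_zero {a b : V} (h : G.Adj a b) :
    bracketVtx G a b (Sum.inr ⟨s(a, b), G.mem_edgeSet.mpr h⟩) ≠ 0 := by
  unfold bracketVtx edg
  split_ifs <;> simp

lemma bracketVtx_ne_zero {a b : V} (h : G.Adj a b) : bracketVtx G a b ≠ 0 :=
  fun h0 => bracketVtx_apply_inr_ne_zero h (by rw [h0, Pi.zero_apply])

variable [Fintype V]

lemma bracket_vtx_vtx (a b : V) : bracket G (vtx G a) (vtx G b) = bracketVtx G a b := by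
  unfold bracket vtx
  simp [Pi.single_apply, ite_smul, mul_ite]

lemma bracket_vtx_self (a : V) : bracket G (vtx G a) (vtx G a) = 0 := by
  rw [bracket_vtx_vtx, bracketVtx_self]

lemma bracket_smul_left (c : ℝ) (x y : Niln G) :
    bracket G (c • x) y = c • bracket G x y := by
  unfold bracket
  simp [Finset.smul_sum, mul_assoc, smul_smul]

lemma bracket_smul_right (c : ℝ) (x y : Niln G) :
    bracket G x (c • y) = c • bracket G x y := by
  unfold bracket
  simp [Finset.smul_sum, smul_smul, mul_left_comm]

lemma bracket_neg_left (x y : Niln G) : bracket G (-x) y = -bracket G x y := by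
  simpa using bracket_smul_left (-1) x y

lemma bracket_neg_right (x y : Niln G) : bracket G x (-y) = -bracket G x y := by
  simpa using bracket_smul_right (-1) x y

lemma bracket_edg_left (e : G.edgeSet) (y : Niln G) : bracket G (edg G e) y = 0 := by
  unfold bracket edg
  simp

lemma bracket_edg_right (x : Niln G) (e : G.edgeSet) : bracket G x (edg G e) = 0 := by
  unfold bracket edg
  simp

namespace AdaptedCS

variable (Jc : AdaptedCS G)

lemma map_ne_smul_self {x : Niln G} (hx : x ≠ 0) (c : ℝ) : Jc.J x ≠ c • x := by
  intro hJ
  have h := Jc.j_squared x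
  rw [hJ, map_smul, hJ, smul_smul, ← sub_eq_zero, sub_neg_eq_add] at h
  have hc : (c * c + 1) • x = 0 := by rwa [add_smul, one_smul]
  exact hx ((smul_eq_zero.1 hc).resolve_left (by nlinarith))

lemma exists_map_basisVec (b : V ⊕ G.edgeSet) :
    ∃ (ε : ℝ) (b' : V ⊕ G.edgeSet), (ε = 1 ∨ ε = -1) ∧ Jc.J (basisVec G b) = ε • basisVec G b' := by
  rcases Jc.adapted b with ⟨b', hb⟩ | ⟨b', hb⟩
  · exact ⟨1, b', Or.inl rfl, by rw [hb, one_smul]⟩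
  · exact ⟨-1, b', Or.inr rfl, by rw [hb, neg_one_smul]⟩

lemma exists_map_vtx_of_bracket_ne_zero_left {u : V} {y : Niln G}
    (hne : bracket G (Jc.J (vtx G u)) y ≠ 0) :
    ∃ (ε : ℝ) (a : V), (ε = 1 ∨ ε = -1) ∧ Jc.J (vtx G u) = ε • vtx G a := by
  obtain ⟨ε, b, hε, hJ⟩ := Jc.exists_map_basisVec (Sum.inl u)
  rcases b with a | e
  · exact ⟨ε, a, hε, hJ⟩
  · refine absurd ?_ hne
    rw [vtx, ← basisVec, hJ, basisVec, ← edg, bracket_smul_left, bracket_edg_left, smul_zero]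

lemma exists_map_vtx_of_bracket_ne_zero_right {v : V} {x : Niln G}
    (hne : bracket G x (Jc.J (vtx G v)) ≠ 0) :
    ∃ (ε : ℝ) (b : V), (ε = 1 ∨ ε = -1) ∧ Jc.J (vtx G v) = ε • vtx G b := by
  obtain ⟨ε, b, hε, hJ⟩ := Jc.exists_map_basisVec (Sum.inl v)
  rcases b with b | e
  · exact ⟨ε, b, hε, hJ⟩
  · refine absurd ?_ hne
    rw [vtx, ← basisVec, hJ, basisVec, ← edg, bracket_smul_right, bracket_edg_right, smul_zero]

lemma bracket_map_map_of_bracket_add_eq_zero {x y : Niln G}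
    (hxy : bracket G (Jc.J x) y + bracket G x (Jc.J y) = 0) :
    bracket G (Jc.J x) (Jc.J y) = bracket G x y := by
  have h := Jc.integrable x y
  rwa [hxy, map_zero, add_zero, sub_eq_zero, eq_comm] at h

lemma distinguished_mk_iff {u v : V} (h : G.Adj u v) :
    Jc.Distinguished ⟨s(u, v), G.mem_edgeSet.mpr h⟩ ↔
      Jc.J (vtx G u) = vtx G v ∨ Jc.J (vtx G v) = vtx G u := by
  refine ⟨fun ⟨a, b, hs, hJ⟩ => ?_, fun hJ => ⟨u, v, rfl, hJ⟩⟩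
  rcases Sym2.eq_iff.1 hs with ⟨rfl, rfl⟩ | ⟨rfl, rfl⟩ <;> tauto

lemma bracket_map_vtx_eq_zero {u v : V}
    (hJ : Jc.J (vtx G u) = vtx G v ∨ Jc.J (vtx G v) = vtx G u) :
    bracket G (Jc.J (vtx G u)) (vtx G v) = 0 ∧ bracket G (vtx G u) (Jc.J (vtx G v)) = 0 := by
  rcases hJ with hJ | hJ
  · have hJv : Jc.J (vtx G v) = -vtx G u := by rw [← hJ, Jc.j_squared]
    rw [hJ, hJv, bracket_neg_right, bracket_vtx_self, bracket_vtx_self, neg_zero]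
    exact ⟨rfl, rfl⟩
  · have hJu : Jc.J (vtx G u) = -vtx G v := by rw [← hJ, Jc.j_squared]
    rw [hJ, hJu, bracket_neg_left, bracket_vtx_self, bracket_vtx_self, neg_zero]
    exact ⟨rfl, rfl⟩

/-- Since `[Ju, Jv] = [u, v]` is a nonzero multiple of the edge `uv`, `J` maps `u` and `v` to
`±` the endpoints of `uv`; `J` has no real eigenvector, so `Ju = ±v` and `Jv = ±u`, and `J² = -1`
forces exactly one of the two signs to be `+`. -/
theorem map_vtx_eq_or_of_bracket_map_map {u v : V} (h : G.Adj u v)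
    (hN : bracket G (Jc.J (vtx G u)) (Jc.J (vtx G v)) = bracket G (vtx G u) (vtx G v)) :
    Jc.J (vtx G u) = vtx G v ∨ Jc.J (vtx G v) = vtx G u := by
  have hne : bracket G (Jc.J (vtx G u)) (Jc.J (vtx G v)) ≠ 0 := by
    rw [hN, bracket_vtx_vtx]; exact bracketVtx_ne_zero h
  obtain ⟨ε, a, hε, hJu⟩ := Jc.exists_map_vtx_of_bracket_ne_zero_left hne
  obtain ⟨δ, b, hδ, hJv⟩ := Jc.exists_map_vtx_of_bracket_ne_zero_right hne
  rw [hJu, hJv, bracket_smul_left, bracket_smul_right, smul_smul, bracket_vtx_vtx,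
    bracket_vtx_vtx] at hN
  have hab : s(u, v) = s(a, b) := by
    by_contra hab
    have huv := congrFun hN (Sum.inr ⟨s(u, v), G.mem_edgeSet.mpr h⟩)
    rw [Pi.smul_apply, bracketVtx_apply_inr_of_ne hab, smul_zero] at huv
    exact bracketVtx_apply_inr_ne_zero h huv.symm
  rcases Sym2.eq_iff.1 hab with ⟨rfl, -⟩ | ⟨rfl, rfl⟩
  · exact absurd hJu (Jc.map_ne_smul_self (vtx_ne_zero _) ε)
  have hεδ : ε * δ = -1 := by
    have h2 := Jc.j_squared (vtx G u)
    rw [hJu, map_smul, hJv, smul_smul, ← neg_one_smul ℝ (vtx G u)] at h2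
    exact smul_left_injective ℝ (vtx_ne_zero u) h2
  rcases hε with rfl | rfl
  · exact Or.inl (by rw [hJu, one_smul])
  · exact Or.inr (by rw [hJv, show δ = 1 by linarith, one_smul])

end AdaptedCS

end

/-- Let `J` be an adapted complex structure on a finite simple graph `G`,
and let `u, v` be adjacent vertices of `G`.  The following are equivalent:
(i) the edge joining `u` and `v` is distinguished;
(ii) `[Ju, v] + [u, Jv] = 0` in `𝔫_G`;
(iii) `[Ju, v] = 0` and `[u, Jv] = 0` in `𝔫_G`. -/
theorem statement1 {V : Type*} [Fintype V] [LinearOrder V] {G : SimpleGraph V}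
    [DecidableRel G.Adj] (Jc : AdaptedCS G) (u v : V) (h : G.Adj u v) :
    (Jc.Distinguished ⟨s(u, v), G.mem_edgeSet.mpr h⟩ ↔
      bracket G (Jc.J (vtx G u)) (vtx G v) + bracket G (vtx G u) (Jc.J (vtx G v)) = 0) ∧
    ((bracket G (Jc.J (vtx G u)) (vtx G v) + bracket G (vtx G u) (Jc.J (vtx G v)) = 0) ↔
      (bracket G (Jc.J (vtx G u)) (vtx G v) = 0 ∧ bracket G (vtx G u) (Jc.J (vtx G v)) = 0)) := by
  have iii_of_i : Jc.Distinguished ⟨s(u, v), G.mem_edgeSet.mpr h⟩ →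
      bracket G (Jc.J (vtx G u)) (vtx G v) = 0 ∧ bracket G (vtx G u) (Jc.J (vtx G v)) = 0 :=
    fun hd => Jc.bracket_map_vtx_eq_zero ((Jc.distinguished_mk_iff h).1 hd)
  have i_of_ii : bracket G (Jc.J (vtx G u)) (vtx G v) + bracket G (vtx G u) (Jc.J (vtx G v)) = 0 →
      Jc.Distinguished ⟨s(u, v), G.mem_edgeSet.mpr h⟩ := fun hii =>
    (Jc.distinguished_mk_iff h).2
      (Jc.map_vtx_eq_or_of_bracket_map_map h (Jc.bracket_map_map_of_bracket_add_eq_zero hii))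
  have ii_of_iii : bracket G (Jc.J (vtx G u)) (vtx G v) = 0 ∧
      bracket G (vtx G u) (Jc.J (vtx G v)) = 0 →
      bracket G (Jc.J (vtx G u)) (vtx G v) + bracket G (vtx G u) (Jc.J (vtx G v)) = 0 :=
    fun ⟨h1, h2⟩ => by rw [h1, h2, add_zero]
  exact ⟨⟨ii_of_iii ∘ iii_of_i, i_of_ii⟩, ⟨iii_of_i ∘ i_of_ii, ii_of_iii⟩⟩

end GraphLie
end

section
/- Let J be an adapted complex structure on a finite simple graph G and let w be a vertex of G such that Jw lies in the center of 𝔫_G. Then the neighborhood N_w of w is invariant under J up to sign (i.e., for every x ∈ N_w, either Jx ∈ N_w or −Jx ∈ N_w); in particular, the degree of w is even. Moreover, if Jw or −Jw is an edge of G, then that edge is distinguished. -/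
/-!  Framework: the 2-step nilpotent Lie algebra `𝔫_G` associated to a finite simple
graph `G` (Dani–Mainkar construction), and adapted complex structures on it. -/

open scoped BigOperators

/-!
`J` permutes the basis `V ∪ E` up to sign by a fixed-point-free involution `perm`. When `Jw` is
central, the Nijenhuis condition for `(w, x)` reduces to `J[w, Jx] = -[w, x]`, so for a
neighbour `x` of `w` the basis vector `perm x` brackets nontrivially with `w`: it is again a
neighbour, and `perm` restricts to a fixed-point-free involution of `N_w`.

Applying `J` to the Nijenhuis condition shows that `J[x, y]` and `J[Jx, Jy]` have the same
vertex components, since brackets have none. If `Jw = ±e` with `e = ab`, then `Je = ∓w`, so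
`J[a, b]` has a nonzero `w`-component; hence so does `J[Ja, Jb]`, which forces `Ja, Jb` to be
(up to sign) adjacent vertices `c, d` with `perm (cd) = w = perm e`. Thus `cd = ab`, and as
`c ≠ a` we get `Ja = ±b`.
-/

theorem Finset.even_card_of_involutive {α : Type*} {f : α → α} (hf : Function.Involutive f)
    (hfix : ∀ a, f a ≠ a) {s : Finset α} (hs : ∀ a ∈ s, f a ∈ s) : Even s.card := by
  classical
  let g : Function.End s := fun a => ⟨f a, hs a a.2⟩
  have hmod := Equiv.Perm.card_fixedPoints_modEq (p := 2) (n := 1) (f := g)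
    (funext fun a => Subtype.ext (hf a))
  have : IsEmpty (Function.fixedPoints g) := ⟨fun a => hfix a.1 (congrArg Subtype.val a.2)⟩
  rw [Fintype.card_eq_zero (α := Function.fixedPoints g), Fintype.card_coe] at hmod
  exact Nat.even_iff.mpr hmod

namespace GraphLie

variable {V : Type*} [LinearOrder V] {G : SimpleGraph V}

lemma basisVec_inl (v : V) : basisVec G (Sum.inl v) = vtx G v := rfl

lemma basisVec_inr (e : G.edgeSet) : basisVec G (Sum.inr e) = edg G e := rfl

lemma eq_of_smul_basisVec_eq {s t : ℝ} {b b' : V ⊕ G.edgeSet} (hs : s ≠ 0)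
    (h : s • basisVec G b = t • basisVec G b') : b = b' ∧ s = t := by
  have hb := congrFun h b
  simp only [basisVec, Pi.smul_apply, Pi.single_eq_same, Pi.single_apply, smul_eq_mul,
    mul_one, mul_ite, mul_zero] at hb
  by_cases hbb : b = b'
  · simp_all
  · simp_all

variable [DecidableRel G.Adj]

lemma bracketVtx_apply_inl (i j v : V) : bracketVtx G i j (Sum.inl v) = 0 := by
  unfold bracketVtx
  split_ifs <;> simp [edg]

lemma bracketVtx_of_adj {a b : V} (h : G.Adj a b) :
    ∃ σ : ℝ, (σ = 1 ∨ σ = -1) ∧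
      bracketVtx G a b = σ • edg G ⟨s(a, b), G.mem_edgeSet.mpr h⟩ := by
  unfold bracketVtx
  rw [dif_pos h]
  split_ifs
  · exact ⟨1, Or.inl rfl, (one_smul _ _).symm⟩
  · exact ⟨-1, Or.inr rfl, (neg_one_smul _ _).symm⟩

lemma bracketVtx_of_not_adj {a b : V} (h : ¬ G.Adj a b) : bracketVtx G a b = 0 :=
  dif_neg h

variable [Fintype V]

lemma bracket_apply_inl (x y : Niln G) (v : V) : bracket G x y (Sum.inl v) = 0 := by
  simp [bracket, Finset.sum_apply, bracketVtx_apply_inl]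

lemma bracket_vtx_vtx_ne_zero {a b : V} (h : G.Adj a b) :
    bracket G (vtx G a) (vtx G b) ≠ 0 := by
  obtain ⟨σ, hσ, hab⟩ := bracketVtx_of_adj h
  rw [bracket_vtx_vtx, hab, ← basisVec_inr]
  intro h0
  have := congrFun h0 (Sum.inr ⟨s(a, b), G.mem_edgeSet.mpr h⟩)
  rcases hσ with rfl | rfl <;> simp [basisVec] at this

lemma exists_adj_of_bracket_basisVec_ne_zero {p q : V ⊕ G.edgeSet}
    (h : bracket G (basisVec G p) (basisVec G q) ≠ 0) :
    ∃ c d, p = Sum.inl c ∧ q = Sum.inl d ∧ G.Adj c d := by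
  rcases p with c | e
  · rcases q with d | e
    · refine ⟨c, d, rfl, rfl, ?_⟩
      by_contra hcd
      exact h (by rw [basisVec_inl, basisVec_inl, bracket_vtx_vtx, bracketVtx_of_not_adj hcd])
    · exact absurd (bracket_edg_right _ e) h
  · exact absurd (bracket_edg_left e _) h

namespace AdaptedCS

variable (Jc : AdaptedCS G)

lemma exists_J_basisVec (b : V ⊕ G.edgeSet) :
    ∃ b' : V ⊕ G.edgeSet, ∃ s : ℝ, (s = 1 ∨ s = -1) ∧
      Jc.J (basisVec G b) = s • basisVec G b' := by
  rcases Jc.adapted b with ⟨b', h⟩ | ⟨b', h⟩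
  · exact ⟨b', 1, Or.inl rfl, by rw [h, one_smul]⟩
  · exact ⟨b', -1, Or.inr rfl, by rw [h, neg_one_smul]⟩

/-- `J (basisVec b) = sign b • basisVec (perm b)`. -/
noncomputable def perm (b : V ⊕ G.edgeSet) : V ⊕ G.edgeSet :=
  (Jc.exists_J_basisVec b).choose

noncomputable def sign (b : V ⊕ G.edgeSet) : ℝ :=
  (Jc.exists_J_basisVec b).choose_spec.choose

lemma sign_eq_one_or_eq_neg_one (b : V ⊕ G.edgeSet) : Jc.sign b = 1 ∨ Jc.sign b = -1 :=
  (Jc.exists_J_basisVec b).choose_spec.choose_spec.1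

lemma sign_ne_zero (b : V ⊕ G.edgeSet) : Jc.sign b ≠ 0 := by
  rcases Jc.sign_eq_one_or_eq_neg_one b with h | h <;> rw [h] <;> norm_num

lemma J_basisVec (b : V ⊕ G.edgeSet) :
    Jc.J (basisVec G b) = Jc.sign b • basisVec G (Jc.perm b) :=
  (Jc.exists_J_basisVec b).choose_spec.choose_spec.2

lemma J_basisVec_apply_ne_zero_iff (b b' : V ⊕ G.edgeSet) :
    Jc.J (basisVec G b) b' ≠ 0 ↔ Jc.perm b = b' := by
  rw [J_basisVec]
  by_cases h : b' = Jc.perm b <;> simp [basisVec, h, Jc.sign_ne_zero, eq_comm]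

lemma J_J_basisVec (b : V ⊕ G.edgeSet) :
    (Jc.sign b * Jc.sign (Jc.perm b)) • basisVec G (Jc.perm (Jc.perm b)) =
      (-1 : ℝ) • basisVec G b := by
  rw [neg_one_smul, ← Jc.j_squared, J_basisVec, map_smul, J_basisVec, smul_smul]

lemma perm_involutive : Function.Involutive Jc.perm := fun b =>
  (eq_of_smul_basisVec_eq (mul_ne_zero (Jc.sign_ne_zero _) (Jc.sign_ne_zero _))
    (Jc.J_J_basisVec b)).1

lemma perm_ne_self (b : V ⊕ G.edgeSet) : Jc.perm b ≠ b := by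
  intro h
  have hsq := (eq_of_smul_basisVec_eq (mul_ne_zero (Jc.sign_ne_zero _) (Jc.sign_ne_zero _))
    (Jc.J_J_basisVec b)).2
  rw [h] at hsq
  nlinarith [sq_nonneg (Jc.sign b)]

lemma J_vtx_eq_or_eq_neg {x x' : V} (h : Jc.perm (Sum.inl x) = Sum.inl x') :
    Jc.J (vtx G x) = vtx G x' ∨ Jc.J (vtx G x) = - vtx G x' := by
  rw [← basisVec_inl, J_basisVec, h, basisVec_inl]
  rcases Jc.sign_eq_one_or_eq_neg_one (Sum.inl x) with hs | hs <;> rw [hs]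
  · exact Or.inl (one_smul _ _)
  · exact Or.inr (neg_one_smul _ _)

lemma J_eq_of_J_eq_neg {x y : Niln G} (h : Jc.J x = -y) : Jc.J y = x := by
  rw [← neg_neg y, ← h, map_neg, Jc.j_squared, neg_neg]

lemma J_bracket_J_of_central {x : Niln G} (hx : ∀ y, bracket G (Jc.J x) y = 0) (y : Niln G) :
    Jc.J (bracket G x (Jc.J y)) = - bracket G x y := by
  have h := Jc.integrable x y
  rw [hx, hx, zero_add, sub_zero] at h
  exact eq_neg_of_add_eq_zero_right h

lemma J_bracket_J_J_apply_inl (x y : Niln G) (v : V) :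
    Jc.J (bracket G (Jc.J x) (Jc.J y)) (Sum.inl v) = Jc.J (bracket G x y) (Sum.inl v) := by
  have h := congrArg (fun z => Jc.J z (Sum.inl v)) (Jc.integrable x y)
  simp only [map_sub, map_add, Jc.j_squared, map_zero, Pi.sub_apply, Pi.add_apply,
    Pi.neg_apply, Pi.zero_apply, bracket_apply_inl, neg_zero, add_zero] at h
  linarith

lemma J_bracket_vtx_apply_inl_ne_zero_iff (a b v : V) :
    Jc.J (bracket G (vtx G a) (vtx G b)) (Sum.inl v) ≠ 0 ↔
      ∃ h : G.Adj a b, Jc.perm (Sum.inr ⟨s(a, b), G.mem_edgeSet.mpr h⟩) = Sum.inl v := by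
  rw [bracket_vtx_vtx]
  by_cases hab : G.Adj a b
  · obtain ⟨σ, hσ, h⟩ := bracketVtx_of_adj hab
    have hσ0 : σ ≠ 0 := by rcases hσ with rfl | rfl <;> norm_num
    rw [h, ← basisVec_inr, map_smul, Pi.smul_apply, smul_eq_mul, mul_ne_zero_iff,
      J_basisVec_apply_ne_zero_iff]
    exact ⟨fun h => ⟨hab, h.2⟩, fun ⟨_, h⟩ => ⟨hσ0, h⟩⟩
  · simp [hab, bracketVtx_of_not_adj]

lemma exists_perm_of_J_bracket_vtx_apply_inl_ne_zero {a b v : V}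
    (h : Jc.J (bracket G (vtx G a) (vtx G b)) (Sum.inl v) ≠ 0) :
    ∃ c d, Jc.perm (Sum.inl a) = Sum.inl c ∧ Jc.perm (Sum.inl b) = Sum.inl d ∧
      Jc.J (bracket G (vtx G c) (vtx G d)) (Sum.inl v) ≠ 0 := by
  rw [← J_bracket_J_J_apply_inl, ← basisVec_inl, ← basisVec_inl, J_basisVec, J_basisVec,
    bracket_smul_left, bracket_smul_right, map_smul, map_smul] at h
  have hpq : Jc.J (bracket G (basisVec G (Jc.perm (Sum.inl a)))
      (basisVec G (Jc.perm (Sum.inl b)))) (Sum.inl v) ≠ 0 := by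
    intro h0
    exact h (by simp [h0])
  obtain ⟨c, d, hc, hd, -⟩ :=
    exists_adj_of_bracket_basisVec_ne_zero fun h0 => hpq (by rw [h0, map_zero]; rfl)
  rw [hc, hd] at hpq
  exact ⟨c, d, hc, hd, hpq⟩

lemma perm_inl_of_adj {w x : V} (hc : ∀ y, bracket G (Jc.J (vtx G w)) y = 0)
    (hx : G.Adj w x) : ∃ x', Jc.perm (Sum.inl x) = Sum.inl x' ∧ G.Adj w x' := by
  have hne : bracket G (vtx G w) (Jc.J (vtx G x)) ≠ 0 := by
    intro h0
    have h := Jc.J_bracket_J_of_central hc (vtx G x)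
    rw [h0, map_zero, zero_eq_neg] at h
    exact bracket_vtx_vtx_ne_zero hx h
  rw [← basisVec_inl x, J_basisVec, bracket_smul_right, ← basisVec_inl w] at hne
  obtain ⟨c, x', hwc, hx', hadj⟩ :=
    exists_adj_of_bracket_basisVec_ne_zero (right_ne_zero_of_smul hne)
  cases hwc
  exact ⟨x', hx', hadj⟩

lemma perm_inl_of_perm_inl_eq_inr {w a b : V} {e : G.edgeSet} (he : (e : Sym2 V) = s(a, b))
    (hw : Jc.perm (Sum.inl w) = Sum.inr e) : Jc.perm (Sum.inl a) = Sum.inl b := by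
  have hab : G.Adj a b := G.mem_edgeSet.mp (he ▸ e.2)
  have hew : Jc.perm (Sum.inr e) = Sum.inl w := by rw [← hw, Jc.perm_involutive]
  have hee : (⟨s(a, b), G.mem_edgeSet.mpr hab⟩ : G.edgeSet) = e := Subtype.ext he.symm
  have habw : Jc.J (bracket G (vtx G a) (vtx G b)) (Sum.inl w) ≠ 0 :=
    (Jc.J_bracket_vtx_apply_inl_ne_zero_iff a b w).mpr ⟨hab, by rw [hee, hew]⟩
  obtain ⟨c, d, hac, -, hcd⟩ := Jc.exists_perm_of_J_bracket_vtx_apply_inl_ne_zero habw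
  obtain ⟨_, hcdw⟩ := (Jc.J_bracket_vtx_apply_inl_ne_zero_iff c d w).mp hcd
  have hcd_ab : s(c, d) = s(a, b) :=
    (congrArg Subtype.val
      (Sum.inr_injective (Jc.perm_involutive.injective (hcdw.trans hew.symm)))).trans he
  rcases Sym2.eq_iff.mp hcd_ab with ⟨rfl, -⟩ | ⟨rfl, -⟩
  · exact absurd hac (Jc.perm_ne_self _)
  · exact hac

end AdaptedCS

end GraphLie

namespace GraphLie

variable {V : Type*} [Fintype V] [LinearOrder V] {G : SimpleGraph V} [DecidableRel G.Adj]

/-- If `w` is a vertex such that `Jw` lies in the center of `𝔫_G`, then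
the neighborhood of `w` is invariant under `J` up to sign, the degree of `w` is even, and
if `Jw` is (up to sign) an edge then that edge is distinguished. -/
theorem statement4 (Jc : AdaptedCS G) (w : V)
    (hc : ∀ y : Niln G, bracket G (Jc.J (vtx G w)) y = 0) :
    (∀ x ∈ G.neighborSet w, ∃ x' ∈ G.neighborSet w,
        Jc.J (vtx G x) = vtx G x' ∨ Jc.J (vtx G x) = - vtx G x') ∧
    Even (G.degree w) ∧
    (∀ e : G.edgeSet, (Jc.J (vtx G w) = edg G e ∨ Jc.J (vtx G w) = - edg G e) →
        Jc.Distinguished e) := by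
  refine ⟨fun x hx => ?_, ?_, fun e he => ?_⟩
  · obtain ⟨x', hx', hadj⟩ := Jc.perm_inl_of_adj hc hx
    exact ⟨x', hadj, Jc.J_vtx_eq_or_eq_neg hx'⟩
  · rw [← G.card_neighborFinset_eq_degree, ← Finset.card_map .inl]
    refine Finset.even_card_of_involutive Jc.perm_involutive Jc.perm_ne_self ?_
    simp only [Finset.mem_map, SimpleGraph.mem_neighborFinset, Function.Embedding.inl_apply,
      forall_exists_index, and_imp]
    rintro _ x hx rfl
    obtain ⟨x', hx', hadj⟩ := Jc.perm_inl_of_adj hc hx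
    exact ⟨x', hadj, hx'.symm⟩
  · have hw : Jc.perm (Sum.inl w) = Sum.inr e := by
      rw [← Jc.J_basisVec_apply_ne_zero_iff, basisVec_inl]
      rcases he with h | h <;> simp [h, edg]
    obtain ⟨a, b, hab⟩ : ∃ a b : V, (e : Sym2 V) = s(a, b) :=
      Sym2.ind (fun a b => ⟨a, b, rfl⟩) (e : Sym2 V)
    refine ⟨a, b, hab, ?_⟩
    rcases Jc.J_vtx_eq_or_eq_neg (Jc.perm_inl_of_perm_inl_eq_inr hab hw) with h | h
    · exact Or.inl h
    · exact Or.inr (Jc.J_eq_of_J_eq_neg h)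

end GraphLie
end
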